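/- Let r ≥ 2, let p < p' be coprime positive integers, and let n ∈ ℕ. Then in A = AddMonoidAlgebra ℤ ℚ: Σ_{λ ∈ Π_{r,n}} Σ_{w ∈ S_r} sign(w) · q^{(pp'/2)‖λ‖² + p'⟨λ, w•δ⟩ + p⟨λ, δ⟩ + ⟨w•δ, δ⟩} = (−1)^{r(r−1)/2} · Σ_{λ ∈ Π_{r,n}} Σ_{w ∈ S_r} sign(w) · q^{(pp'/2)‖λ‖² − p'⟨λ, δ⟩ + p⟨λ, w•δ⟩ − ⟨w•δ, δ⟩}. -/

import Mathlib

/-!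
Reindex the right-hand double sum by `(λ, w) ↦ (u • λ, u)` with `u = w₀ w⁻¹`, where `w₀` is the
reversal of `Fin r` (the longest element of `S_r`). Because `w₀ • δ = -δ` and the inner product is
`S_r`-invariant, this carries each exponent on the right to the corresponding one on the left, and
`sign u = (-1)^{r(r-1)/2} sign w`. The reindexing is allowed because `Π_{r,n}` is `S_r`-stable: it
consists exactly of the vectors `c - (n/r)(1,…,1)` with `c ∈ ℕ^r` summing to `n`, the `a_i` being the
tail sums of `c`.
-/

open Finset

noncomputable section

/-- Inner product `⟨u,v⟩ = Σ_i u i * v i` on `ℚ^r`. -/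
def ip {r : ℕ} (u v : Fin r → ℚ) : ℚ := ∑ i, u i * v i

/-- Action of `S_r` permuting coordinates: `(w • v) i = v (w⁻¹ i)`. -/
def pact {r : ℕ} (w : Equiv.Perm (Fin r)) (v : Fin r → ℚ) : Fin r → ℚ := fun i => v (w⁻¹ i)

/-- The Weyl vector `δ`, whose (1-indexed) `i`-th coordinate is `(r+1-2i)/2`. -/
def weylδ (r : ℕ) : Fin r → ℚ := fun j => ((r : ℚ) - 1 - 2 * ((j : ℕ) : ℚ)) / 2

/-- Membership in `V = {v : Fin r → ℚ | Σ_i v i = 0}`. -/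
def memV {r : ℕ} (v : Fin r → ℚ) : Prop := ∑ i, v i = 0

/-- Membership in the root lattice `Q_r`. -/
def memQ {r : ℕ} (v : Fin r → ℚ) : Prop := memV v ∧ ∀ i, ∃ m : ℤ, v i = (m : ℚ)

/-- Membership in the weight lattice `P_r`. -/
def memP {r : ℕ} (v : Fin r → ℚ) : Prop := memV v ∧ ∀ i j, ∃ m : ℤ, v i - v j = (m : ℚ)

/-- The first fundamental weight `Λ₁ = ε₁ - (1/r)(ε₁ + ⋯ + ε_r)`. -/
def Lam1 (r : ℕ) : Fin r → ℚ := fun j => (if (j : ℕ) = 0 then 1 else 0) - 1 / (r : ℚ)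

/-- The simple roots, 0-indexed: `srootF i = ε_{i+1} - ε_{i+2}` in 1-indexed notation. -/
def srootF {r : ℕ} (i : Fin (r - 1)) : Fin r → ℚ :=
  fun j => (if (j : ℕ) = (i : ℕ) then 1 else 0) - (if (j : ℕ) = (i : ℕ) + 1 then 1 else 0)

/-- The highest root `θ = ε₁ - ε_r`. -/
def hroot (r : ℕ) : Fin r → ℚ :=
  fun j => (if (j : ℕ) = 0 then 1 else 0) - (if (j : ℕ) = r - 1 then 1 else 0)

/-- The set `Π_{r,n}` of weights of `L_r(nΛ₁)`:
all `nΛ₁ - a₁α₁ - ⋯ - a_{r-1}α_{r-1}` with `n ≥ a₁ ≥ ⋯ ≥ a_{r-1} ≥ 0`. -/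
def PiWts (r n : ℕ) : Set (Fin r → ℚ) :=
  {v | ∃ a : Fin (r - 1) → ℤ, (∀ i, 0 ≤ a i) ∧ (∀ i, a i ≤ (n : ℤ)) ∧
        (∀ i j, i ≤ j → a j ≤ a i) ∧
        v = (n : ℚ) • Lam1 r - ∑ i, (a i : ℚ) • srootF i}

/-- `Π_{r,n}` as a `Finset`: the (finitely many, multiplicity-one) weights of `L_r(nΛ₁)`. -/
def PiFin (r n : ℕ) : Finset (Fin r → ℚ) :=
  ((Finset.univ : Finset (Fin (r - 1) → Fin (n + 1))).filter
      (fun a => ∀ i j : Fin (r - 1), i ≤ j → ((a j : ℕ) : ℤ) ≤ ((a i : ℕ) : ℤ))).image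
    (fun a => (n : ℚ) • Lam1 r - ∑ i, ((a i : ℕ) : ℚ) • srootF i)


open Equiv

theorem sign_revPerm (n : ℕ) :
    Perm.sign (Fin.revPerm : Perm (Fin n)) = (-1) ^ (n * (n - 1) / 2) := by
  have h (j : Fin n) :
      ∏ i ∈ Iio j, (if Fin.revPerm i < Fin.revPerm j then (1 : ℤˣ) else -1) = (-1) ^ (j : ℕ) := by
    rw [prod_congr rfl fun i hi => if_neg ?_, prod_const, Fin.card_Iio]
    simpa using (mem_Iio.1 hi).le
  rw [Perm.sign_eq_prod_prod_Iio, prod_congr rfl fun j _ => h j, prod_pow_eq_pow_sum,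
    Fin.sum_univ_eq_sum_range (fun i => i), sum_range_id]

section Action

variable {r : ℕ}

theorem pact_one (x : Fin r → ℚ) : pact 1 x = x := rfl

theorem pact_mul (u v : Perm (Fin r)) (x : Fin r → ℚ) :
    pact (u * v) x = pact u (pact v x) := by
  ext i; simp [pact]

theorem pact_neg (w : Perm (Fin r)) (v : Fin r → ℚ) : pact w (-v) = -pact w v := rfl

theorem ip_comm (u v : Fin r → ℚ) : ip u v = ip v u := by
  simp only [ip, mul_comm]

theorem ip_neg_right (u v : Fin r → ℚ) : ip u (-v) = -ip u v := by
  simp [ip]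

theorem ip_pact_pact (w : Perm (Fin r)) (u v : Fin r → ℚ) :
    ip (pact w u) (pact w v) = ip u v :=
  Equiv.sum_comp w⁻¹ fun i => u i * v i

theorem ip_pact_left (w : Perm (Fin r)) (u v : Fin r → ℚ) :
    ip (pact w u) v = ip u (pact w⁻¹ v) := by
  rw [← ip_pact_pact w⁻¹, ← pact_mul, inv_mul_cancel, pact_one]

theorem pact_revPerm_weylδ : pact Fin.revPerm (weylδ r) = -weylδ r := by
  ext i
  have hi : (i : ℕ) < r := i.2
  simp only [pact, weylδ, Pi.neg_apply, Perm.inv_def, Fin.revPerm_symm, Fin.revPerm_apply,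
    Fin.val_rev]
  rw [Nat.cast_sub (by omega)]
  push_cast
  ring

theorem exponent_pact_revPerm_mul_inv (p p' : ℚ) (lam : Fin r → ℚ) (w : Perm (Fin r)) :
    let u := Fin.revPerm * w⁻¹
    (p * p' / 2) * ip (pact u lam) (pact u lam) - p' * ip (pact u lam) (weylδ r)
        + p * ip (pact u lam) (pact u (weylδ r)) - ip (pact u (weylδ r)) (weylδ r)
      = (p * p' / 2) * ip lam lam + p' * ip lam (pact w (weylδ r))
        + p * ip lam (weylδ r) + ip (pact w (weylδ r)) (weylδ r) := by
  intro u
  have hu : u⁻¹ = w * Fin.revPerm := by simp [u, Fin.revPerm_symm, Perm.inv_def]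
  have h1 : ip (pact u lam) (weylδ r) = -ip lam (pact w (weylδ r)) := by
    rw [ip_pact_left, hu, pact_mul, pact_revPerm_weylδ, pact_neg, ip_neg_right]
  have h2 : ip (pact u (weylδ r)) (weylδ r) = -ip (pact w (weylδ r)) (weylδ r) := by
    rw [ip_pact_left, hu, pact_mul, pact_revPerm_weylδ, pact_neg, ip_neg_right, ip_comm]
  rw [ip_pact_pact, ip_pact_pact, h1, h2]
  ring

end Action

def padSeq (n : ℕ) {m : ℕ} (b : Fin m → ℕ) : ℕ → ℕ
  | 0 => n
  | i + 1 => if h : i < m then b ⟨i, h⟩ else 0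

theorem padSeq_antitone {n m : ℕ} {b : Fin m → ℕ} (hbn : ∀ i, b i ≤ n)
    (hb : ∀ i j, i ≤ j → b j ≤ b i) : Antitone (padSeq n b) := by
  refine antitone_nat_of_succ_le fun i => ?_
  cases i with
  | zero => simp only [padSeq]; split_ifs <;> simp [hbn]
  | succ i =>
    simp only [padSeq]
    split_ifs with h1 h2 <;> first | omega | exact hb _ _ (Fin.mk_le_mk.2 (by omega))

theorem sum_sub_padSeq {n r : ℕ} (hr : 1 ≤ r) (b : Fin (r - 1) → ℕ) :
    ∑ j : Fin r, ((padSeq n b j : ℚ) - padSeq n b (j + 1)) = n := by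
  rw [Fin.sum_univ_eq_sum_range (fun j => (padSeq n b j : ℚ) - padSeq n b (j + 1)),
    sum_range_sub']
  obtain ⟨r, rfl⟩ := Nat.exists_eq_add_of_le' hr
  simp [padSeq]

theorem sum_mul_ite_val_eq {m : ℕ} (f : Fin m → ℚ) (k : ℕ) :
    ∑ i : Fin m, f i * (if k = (i : ℕ) then 1 else 0) = if h : k < m then f ⟨k, h⟩ else 0 := by
  split_ifs with h
  · rw [sum_eq_single ⟨k, h⟩ (fun i _ hi => by rw [if_neg fun hk => hi (Fin.ext hk.symm), mul_zero])
      (by simp)]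
    simp
  · exact sum_eq_zero fun i _ => by rw [if_neg (by omega), mul_zero]

theorem smul_Lam1_sub_sum_smul_srootF_apply {r n : ℕ} (b : Fin (r - 1) → ℕ) (j : Fin r) :
    ((n : ℚ) • Lam1 r - ∑ i, (b i : ℚ) • srootF i) j
      = padSeq n b j - padSeq n b (j + 1) - n / r := by
  obtain ⟨j, hj⟩ := j
  simp only [Pi.sub_apply, Pi.smul_apply, Finset.sum_apply, Lam1, srootF, smul_eq_mul, mul_sub,
    sum_sub_distrib, sum_mul_ite_val_eq, padSeq, apply_dite (Nat.cast : ℕ → ℚ), Nat.cast_zero]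
  cases j with
  | zero => simp only [↓reduceIte, Nat.zero_ne_add_one, mul_one, mul_zero, sum_const_zero]; ring
  | succ k =>
    simp only [Nat.add_right_cancel_iff, sum_mul_ite_val_eq, Nat.add_one_ne_zero, ↓reduceIte,
      show k < r - 1 by omega, ↓reduceDIte]
    ring

def tailSum {r : ℕ} (k : Fin r → ℕ) (m : ℕ) : ℕ := ∑ j : Fin r, if m ≤ (j : ℕ) then k j else 0

theorem tailSum_antitone {r : ℕ} (k : Fin r → ℕ) : Antitone (tailSum k) :=
  fun _ _ h => sum_le_sum fun _ _ => by split_ifs <;> omega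

theorem tailSum_zero {r : ℕ} (k : Fin r → ℕ) : tailSum k 0 = ∑ j, k j := by
  simp [tailSum]

theorem tailSum_of_le {r m : ℕ} (k : Fin r → ℕ) (hm : r ≤ m) : tailSum k m = 0 :=
  sum_eq_zero fun j _ => if_neg (by omega)

theorem tailSum_eq_add {r : ℕ} (k : Fin r → ℕ) (j : Fin r) :
    tailSum k j = k j + tailSum k (j + 1) := by
  rw [tailSum, tailSum, ← sum_ite_eq_of_mem' univ j k (mem_univ j), ← sum_add_distrib]
  exact sum_congr rfl fun i _ => by split_ifs <;> simp_all only [Fin.ext_iff] <;> omega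

theorem mem_PiFin_iff {r n : ℕ} (hr : 1 ≤ r) {lam : Fin r → ℚ} :
    lam ∈ PiFin r n ↔ ∑ j, lam j = 0 ∧ ∀ j, ∃ k : ℕ, lam j = k - n / r := by
  constructor
  · rw [PiFin, mem_image]
    rintro ⟨a, ha, rfl⟩
    have hanti : Antitone (padSeq n fun i => a i) :=
      padSeq_antitone (fun i => Nat.lt_succ_iff.1 (a i).2) fun i j hij => by
        exact_mod_cast (mem_filter.1 ha).2 i j hij
    refine ⟨?_, fun j => ⟨padSeq n (fun i => a i) j - padSeq n (fun i => a i) (j + 1), ?_⟩⟩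
    · simp only [smul_Lam1_sub_sum_smul_srootF_apply, sum_sub_distrib, sum_sub_padSeq hr]
      have : (r : ℚ) ≠ 0 := by positivity
      simp [mul_div_cancel₀ _ this]
    · rw [smul_Lam1_sub_sum_smul_srootF_apply, Nat.cast_sub (hanti (Nat.le_succ _))]
  · rintro ⟨hsum, hk⟩
    choose k hk using hk
    have hkn : tailSum k 0 = n := by
      rw [tailSum_zero]
      have : (r : ℚ) ≠ 0 := by positivity
      simp only [hk, sum_sub_distrib, sum_const, card_univ, Fintype.card_fin, nsmul_eq_mul,
        mul_div_cancel₀ _ this, sub_eq_zero] at hsum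
      exact_mod_cast hsum
    let a : Fin (r - 1) → Fin (n + 1) := fun i =>
      ⟨tailSum k (i + 1), Nat.lt_succ_of_le (hkn ▸ tailSum_antitone k (Nat.zero_le _))⟩
    have hpad : ∀ m ≤ r, padSeq n (fun i => a i) m = tailSum k m := by
      rintro (_ | m) hm
      · exact hkn.symm
      · simp only [padSeq]
        split_ifs with h
        · rfl
        · exact (tailSum_of_le k (by omega)).symm
    rw [PiFin, mem_image]
    refine ⟨a, mem_filter.2 ⟨mem_univ _, fun i j hij => ?_⟩, funext fun j => ?_⟩
    · exact_mod_cast tailSum_antitone k (Nat.succ_le_succ (Fin.le_def.1 hij))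
    · rw [smul_Lam1_sub_sum_smul_srootF_apply, hk, hpad _ j.2.le, hpad _ j.2, tailSum_eq_add]
      push_cast
      ring

theorem pact_mem_PiFin {r n : ℕ} (w : Perm (Fin r)) {lam : Fin r → ℚ} (h : lam ∈ PiFin r n) :
    pact w lam ∈ PiFin r n := by
  rcases Nat.eq_zero_or_pos r with rfl | hr
  · rwa [Subsingleton.elim (pact w lam) lam]
  rw [mem_PiFin_iff hr] at h ⊢
  exact ⟨(Equiv.sum_comp w⁻¹ lam).trans h.1, fun j => h.2 (w⁻¹ j)⟩

theorem sum_PiFin_comp_pact {M : Type*} [AddCommMonoid M] {r n : ℕ} (w : Perm (Fin r))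
    (f : (Fin r → ℚ) → M) : ∑ lam ∈ PiFin r n, f (pact w lam) = ∑ lam ∈ PiFin r n, f lam :=
  sum_nbij' (pact w) (pact w⁻¹) (fun _ h => pact_mem_PiFin w h) (fun _ h => pact_mem_PiFin _ h)
    (fun x _ => by rw [← pact_mul, inv_mul_cancel, pact_one])
    (fun x _ => by rw [← pact_mul, mul_inv_cancel, pact_one]) fun _ _ => rfl

theorem stmt13_general (r p p' : ℕ) (n : ℕ) :
    ∑ lam ∈ PiFin r n, ∑ w : Equiv.Perm (Fin r),
      (AddMonoidAlgebra.single
        (((p : ℚ) * p' / 2) * ip lam lam + p' * ip lam (pact w (weylδ r))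
          + p * ip lam (weylδ r) + ip (pact w (weylδ r)) (weylδ r))
        ((Equiv.Perm.sign w : ℤ)) : AddMonoidAlgebra ℤ ℚ)
    = ((-1 : ℤ) ^ (r * (r - 1) / 2)) •
        ∑ lam ∈ PiFin r n, ∑ w : Equiv.Perm (Fin r),
          (AddMonoidAlgebra.single
            (((p : ℚ) * p' / 2) * ip lam lam - p' * ip lam (weylδ r)
              + p * ip lam (pact w (weylδ r)) - ip (pact w (weylδ r)) (weylδ r))
            ((Equiv.Perm.sign w : ℤ)) : AddMonoidAlgebra ℤ ℚ) := by
  set ε : ℤ := (-1) ^ (r * (r - 1) / 2)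
  have hsign (w : Perm (Fin r)) : ε * Perm.sign (Fin.revPerm * w⁻¹) = Perm.sign w := by
    rw [map_mul, Perm.sign_inv, sign_revPerm, Units.val_mul, ← mul_assoc]
    push_cast
    rw [← mul_pow, neg_one_mul, neg_neg, one_pow, one_mul]
  simp only [smul_sum, AddMonoidAlgebra.smul_single']
  rw [sum_comm, sum_comm (s := PiFin r n)]
  refine Fintype.sum_equiv ((Equiv.inv _).trans (Equiv.mulLeft Fin.revPerm)) _ _ fun w => ?_
  rw [eq_comm, ← sum_PiFin_comp_pact (Fin.revPerm * w⁻¹)]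
  refine sum_congr rfl fun lam _ => ?_
  simp only [Equiv.trans_apply, Equiv.inv_apply, Equiv.coe_mulLeft, hsign,
    exponent_pact_revPerm_mul_inv]

/-- in `A = AddMonoidAlgebra ℤ ℚ`,
`Σ_{λ ∈ Π_{r,n}} Σ_{w} sign(w) q^{(pp'/2)‖λ‖² + p'⟨λ,w•δ⟩ + p⟨λ,δ⟩ + ⟨w•δ,δ⟩}
 = (-1)^{r(r-1)/2} Σ_{λ ∈ Π_{r,n}} Σ_{w} sign(w) q^{(pp'/2)‖λ‖² - p'⟨λ,δ⟩ + p⟨λ,w•δ⟩ - ⟨w•δ,δ⟩}`. -/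
theorem stmt13 (r p p' : ℕ) (hr : 2 ≤ r) (hp : 1 ≤ p) (hpp' : p < p')
    (hcop : Nat.Coprime p p') (n : ℕ) :
    ∑ lam ∈ PiFin r n, ∑ w : Equiv.Perm (Fin r),
      (AddMonoidAlgebra.single
        (((p : ℚ) * p' / 2) * ip lam lam + p' * ip lam (pact w (weylδ r))
          + p * ip lam (weylδ r) + ip (pact w (weylδ r)) (weylδ r))
        ((Equiv.Perm.sign w : ℤ)) : AddMonoidAlgebra ℤ ℚ)
    = ((-1 : ℤ) ^ (r * (r - 1) / 2)) •
        ∑ lam ∈ PiFin r n, ∑ w : Equiv.Perm (Fin r),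
          (AddMonoidAlgebra.single
            (((p : ℚ) * p' / 2) * ip lam lam - p' * ip lam (weylδ r)
              + p * ip lam (pact w (weylδ r)) - ip (pact w (weylδ r)) (weylδ r))
            ((Equiv.Perm.sign w : ℤ)) : AddMonoidAlgebra ℤ ℚ) :=
  stmt13_general r p p' n
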